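/- Any graph on $m$ vertices has at most $3^{m/3}$ maximal independent sets. -/

import Mathlib

/-!
Pick a vertex `v` of minimum degree `d`. Every maximal independent set `S` meets the closed
neighbourhood of `v`, and if `u ∈ S` then `S` is `u` together with a maximal independent set of
the graph induced on the vertices outside the closed neighbourhood of `u`, which has at most
`m - 1 - d` vertices. By induction on `m` there are at most `(d + 1) · 3^((m - 1 - d)/3)`
maximal independent sets, and this is at most `3^(m/3)` because `k ≤ 3^(k/3)` for every
natural number `k`.
-/

/-- A set of vertices is independent if it contains no edge. -/
def SimpleGraph.IsIndepSet' {V : Type*} (G : SimpleGraph V) (S : Set V) : Prop :=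
  ∀ v ∈ S, ∀ w ∈ S, ¬ G.Adj v w

theorem Nat.pow_three_le_three_pow (k : ℕ) : k ^ 3 ≤ 3 ^ k := by
  induction k with
  | zero => norm_num
  | succ k ih =>
    rcases lt_or_ge k 3 with hk | hk
    · interval_cases k <;> norm_num
    · calc (k + 1) ^ 3 ≤ 3 * k ^ 3 := by nlinarith [Nat.mul_le_mul hk hk]
        _ ≤ 3 * 3 ^ k := Nat.mul_le_mul_left 3 ih
        _ = 3 ^ (k + 1) := Nat.pow_succ'.symm

-- Only for natural numbers: the real function `x ↦ 3^(x/3) - x` is negative at `x = e`.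
theorem Real.natCast_le_three_rpow_div_three (k : ℕ) : (k : ℝ) ≤ 3 ^ ((k : ℝ) / 3) := by
  have hcube : ((3 : ℝ) ^ ((k : ℝ) / 3)) ^ 3 = 3 ^ k := by
    rw [← Real.rpow_mul_natCast (by norm_num)]
    norm_num
  rw [← pow_le_pow_iff_left₀ (Nat.cast_nonneg k) (by positivity) three_ne_zero, hcube]
  exact_mod_cast Nat.pow_three_le_three_pow k

theorem Real.natCast_mul_three_rpow_le (k : ℕ) (x : ℝ) :
    k * (3 : ℝ) ^ ((x - k) / 3) ≤ 3 ^ (x / 3) := by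
  calc k * (3 : ℝ) ^ ((x - k) / 3) ≤ 3 ^ ((k : ℝ) / 3) * 3 ^ ((x - k) / 3) := by
        gcongr
        exact Real.natCast_le_three_rpow_div_three k
    _ = 3 ^ (x / 3) := by rw [← Real.rpow_add (by norm_num)]; ring_nf

open Finset

namespace SimpleGraph

variable {V W : Type*} (G : SimpleGraph V)

def IsMaximalIndepFinset (S : Finset V) : Prop :=
  G.IsIndepSet' ↑S ∧ ∀ T : Finset V, S ⊆ T → G.IsIndepSet' ↑T → T = S

open Classical in
noncomputable def maximalIndepFinsets [Fintype V] : Finset (Finset V) :=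
  {S | G.IsMaximalIndepFinset S}

def nonNeighborSet (u : V) : Set V := {w | w ≠ u ∧ ¬G.Adj u w}

variable {G}

@[simp]
theorem mem_maximalIndepFinsets [Fintype V] {S : Finset V} :
    S ∈ G.maximalIndepFinsets ↔ G.IsMaximalIndepFinset S := by
  simp [maximalIndepFinsets]

theorem isIndepSet'_insert {u : V} {S : Set V} :
    G.IsIndepSet' (insert u S) ↔ G.IsIndepSet' S ∧ ∀ w ∈ S, ¬G.Adj u w := by
  constructor
  · intro h
    exact ⟨fun v hv w hw => h v (.inr hv) w (.inr hw), fun w hw => h u (.inl rfl) w (.inr hw)⟩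
  · rintro ⟨hS, hu⟩ v (rfl | hv) w (rfl | hw)
    · exact G.irrefl
    · exact hu w hw
    · exact fun h => hu v hv h.symm
    · exact hS v hv w hw

theorem isIndepSet'_comap (f : W → V) {A : Set W} :
    (G.comap f).IsIndepSet' A ↔ G.IsIndepSet' (f '' A) := by
  simp [IsIndepSet']

theorem IsMaximalIndepFinset.exists_mem_eq_or_adj {S : Finset V}
    (hS : G.IsMaximalIndepFinset S) (v : V) : ∃ u ∈ S, u = v ∨ G.Adj v u := by
  classical
  by_contra! hv
  have hvS : v ∉ S := fun h => (hv v h).1 rfl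
  have hind : G.IsIndepSet' ↑(insert v S) := by
    rw [coe_insert, isIndepSet'_insert]
    exact ⟨hS.1, fun w hw => (hv w hw).2⟩
  exact hvS (hS.2 _ (subset_insert v S) hind ▸ mem_insert_self v S)

theorem IsIndepSet'.insert_filter_nonNeighborSet [DecidableEq V] {u : V}
    [DecidablePred (· ∈ G.nonNeighborSet u)] {S : Finset V} (hS : G.IsIndepSet' ↑S) (hu : u ∈ S) :
    insert u {w ∈ S | w ∈ G.nonNeighborSet u} = S := by
  ext w
  rw [mem_insert, mem_filter]
  by_cases hwu : w = u
  · simp [hwu, hu]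
  · have : w ∈ S → w ∈ G.nonNeighborSet u := fun hw => ⟨hwu, hS u hu w hw⟩
    tauto

theorem IsIndepSet'.mono {S T : Set V} (hS : G.IsIndepSet' S) (hTS : T ⊆ S) :
    G.IsIndepSet' T :=
  fun v hv w hw => hS v (hTS hv) w (hTS hw)

theorem IsMaximalIndepFinset.subtype_nonNeighborSet {u : V}
    [DecidablePred (· ∈ G.nonNeighborSet u)] {S : Finset V}
    (hS : G.IsMaximalIndepFinset S) (hu : u ∈ S) :
    (G.induce (G.nonNeighborSet u)).IsMaximalIndepFinset
      (S.subtype (· ∈ G.nonNeighborSet u)) := by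
  classical
  have hrecon := hS.1.insert_filter_nonNeighborSet hu
  refine ⟨?_, fun T hST hT => ?_⟩
  · rw [isIndepSet'_comap]
    refine hS.1.mono ?_
    rintro _ ⟨a, ha, rfl⟩
    exact mem_subtype.1 ha
  set T' := insert u (T.map (Function.Embedding.subtype _))
  have hT' : G.IsIndepSet' ↑T' := by
    rw [coe_insert, isIndepSet'_insert, coe_map]
    refine ⟨(isIndepSet'_comap _).1 hT, ?_⟩
    rintro _ ⟨w, -, rfl⟩
    exact w.2.2
  have hST' : S ⊆ T' := by
    rw [← hrecon, ← subtype_map]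
    exact insert_subset_insert _ (map_subset_map.2 hST)
  have hT'S := hS.2 T' hST' hT'
  refine hST.antisymm' fun a ha => mem_subtype.2 ?_
  rw [← hT'S]
  exact mem_insert_of_mem (mem_map_of_mem _ ha)

theorem card_filter_mem_maximalIndepFinsets_le [Fintype V] [DecidableEq V] (u : V)
    [Fintype (G.nonNeighborSet u)] :
    #{S ∈ G.maximalIndepFinsets | u ∈ S} ≤
      #(G.induce (G.nonNeighborSet u)).maximalIndepFinsets := by
  classical
  refine card_le_card_of_injOn (·.subtype (· ∈ G.nonNeighborSet u)) ?_ ?_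
  · intro S hS
    simp only [coe_filter, mem_coe, mem_maximalIndepFinsets, Set.mem_ofPred_eq] at hS ⊢
    exact hS.1.subtype_nonNeighborSet hS.2
  · intro S hS S' hS' h
    simp only [coe_filter, mem_maximalIndepFinsets, Set.mem_ofPred_eq] at hS hS'
    rw [← hS.1.1.insert_filter_nonNeighborSet hS.2, ← hS'.1.1.insert_filter_nonNeighborSet hS'.2,
      ← subtype_map, ← subtype_map]
    simp only at h
    rw [h]

theorem card_maximalIndepFinsets_le_sum [Fintype V] [DecidableEq V] [DecidableRel G.Adj]
    (v : V) :
    #G.maximalIndepFinsets ≤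
      ∑ u ∈ insert v (G.neighborFinset v), #{S ∈ G.maximalIndepFinsets | u ∈ S} := by
  refine le_trans (card_le_card fun S hS => ?_) card_biUnion_le
  obtain ⟨u, huS, hvu⟩ := (mem_maximalIndepFinsets.1 hS).exists_mem_eq_or_adj v
  rw [mem_biUnion]
  exact ⟨u, by simpa [eq_comm] using hvu, mem_filter.2 ⟨hS, huS⟩⟩

variable (G) in
theorem nonNeighborSet_eq_compl (u : V) :
    G.nonNeighborSet u = (insert u (G.neighborSet u))ᶜ := by
  ext w
  simp [nonNeighborSet]

variable (G) in
theorem card_nonNeighborSet_add_degree [Fintype V] [DecidableRel G.Adj] (u : V) :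
    Nat.card (G.nonNeighborSet u) + (G.degree u + 1) = Fintype.card V := by
  rw [nonNeighborSet_eq_compl, Nat.card_coe_set_eq, ← card_neighborSet_eq_degree,
    ← Nat.card_eq_fintype_card, Nat.card_coe_set_eq,
    ← Set.ncard_insert_of_notMem (a := u) (by simp), add_comm, Set.ncard_add_ncard_compl,
    Nat.card_eq_fintype_card]

variable (G) in
theorem card_maximalIndepFinsets_le [Fintype V] :
    (#G.maximalIndepFinsets : ℝ) ≤ 3 ^ ((Fintype.card V : ℝ) / 3) := by
  classical
  induction hn : Fintype.card V using Nat.strong_induction_on generalizing V with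
  | _ n ih =>
  rcases isEmpty_or_nonempty V with hV | hV
  · calc (#G.maximalIndepFinsets : ℝ) ≤ 1 := by exact_mod_cast card_le_one_of_subsingleton _
      _ ≤ 3 ^ ((n : ℝ) / 3) := Real.one_le_rpow (by norm_num) (by positivity)
  obtain ⟨v, hv⟩ := G.exists_minimal_degree_vertex
  have hsub (u : V) : (#(G.induce (G.nonNeighborSet u)).maximalIndepFinsets : ℝ) ≤
      3 ^ (((n : ℝ) - (G.degree v + 1 : ℕ)) / 3) := by
    have hdeg : G.degree v ≤ G.degree u := hv ▸ G.minDegree_le_degree u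
    have hcard : Fintype.card (G.nonNeighborSet u) + (G.degree u + 1) = n := by
      rw [← Nat.card_eq_fintype_card, card_nonNeighborSet_add_degree, hn]
    refine (ih _ (by omega) _ rfl).trans (Real.rpow_le_rpow_of_exponent_le (by norm_num) ?_)
    gcongr
    rw [le_sub_iff_add_le]
    exact_mod_cast (by omega : Fintype.card (G.nonNeighborSet u) + (G.degree v + 1) ≤ n)
  have hcount : #G.maximalIndepFinsets ≤ ∑ u ∈ insert v (G.neighborFinset v),
      #(G.induce (G.nonNeighborSet u)).maximalIndepFinsets :=
    (G.card_maximalIndepFinsets_le_sum v).trans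
      (sum_le_sum fun u _ => G.card_filter_mem_maximalIndepFinsets_le u)
  calc (#G.maximalIndepFinsets : ℝ)
      ≤ ∑ u ∈ insert v (G.neighborFinset v),
          (#(G.induce (G.nonNeighborSet u)).maximalIndepFinsets : ℝ) := by
        exact_mod_cast hcount
    _ ≤ ∑ u ∈ insert v (G.neighborFinset v), (3 : ℝ) ^ (((n : ℝ) - (G.degree v + 1 : ℕ)) / 3) :=
        sum_le_sum fun u _ => hsub u
    _ = (G.degree v + 1 : ℕ) * (3 : ℝ) ^ (((n : ℝ) - (G.degree v + 1 : ℕ)) / 3) := by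
        rw [sum_const, card_insert_of_notMem (by simp), card_neighborFinset_eq_degree, nsmul_eq_mul]
    _ ≤ 3 ^ ((n : ℝ) / 3) := Real.natCast_mul_three_rpow_le _ _

variable (G) in
theorem card_maximalIndepFinsets [Fintype V] :
    #G.maximalIndepFinsets = Nat.card {S : Finset V // G.IsMaximalIndepFinset S} := by
  classical
  rw [Nat.card_eq_fintype_card, Fintype.card_subtype]
  rfl

end SimpleGraph

open Classical in
/-- **Moon–Moser bound**: any graph on `m` vertices has at most `3^{m/3}`
maximal independent sets. -/
theorem card_maximal_indep_sets_le (m : ℕ) (G : SimpleGraph (Fin m)) :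
    (Nat.card {S : Finset (Fin m) // G.IsIndepSet' ↑S ∧
        ∀ T : Finset (Fin m), S ⊆ T → G.IsIndepSet' ↑T → T = S} : ℝ) ≤
      (3 : ℝ) ^ ((m : ℝ) / 3) := by
  have h := G.card_maximalIndepFinsets_le
  rwa [G.card_maximalIndepFinsets, Fintype.card_fin] at h
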